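/- arXiv:1801.07321 — 2 statements merged into one kernel-verified Lean document; each statement's English description precedes it below -/
import Mathlib

section
/- Let L₁, L₂ ⊆ Σ* be nonempty languages and # a symbol not in Σ. Then η(L₁#L₂) = max(η(L₁), η(L₂)), where L₁#L₂ = {u#v | u ∈ L₁, v ∈ L₂} ⊆ (Σ ∪ {#})*. -/
open Filter

/-- The `n`-th Myhill–Nerode approximation: `u ~ v` iff all witnesses of length at most `n`
agree. -/
def thetaN {α : Type*} (L : Set (List α)) (n : ℕ) (u v : List α) : Prop :=
  ∀ w : List α, w.length ≤ n → ((u ++ w) ∈ L ↔ (v ++ w) ∈ L)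

/-- The index (number of classes) of `thetaN L n`. -/
noncomputable def indexN {α : Type*} (L : Set (List α)) (n : ℕ) : ℕ :=
  Nat.card (Quot (thetaN L n))

/-- Topological entropy of a language, with values in `[0,∞]`. -/
noncomputable def entropy {α : Type*} (L : Set (List α)) : ENNReal :=
  Filter.limsup (fun n : ℕ => ENNReal.ofReal (Real.logb 2 (indexN L n) / n)) Filter.atTop

/-!
A word of `L₁#L₂` either has no marker yet, or has the form `u#y` with `u ∈ L₁`, or can never be
completed to a member. Words of the first kind are separated exactly as in `L₁`, except that a
separating witness must be followed by `#` and a word of `L₂`, so a shortest `v₀ ∈ L₂` shifts the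
level by `|v₀| + 1`; words of the second kind are separated exactly as `y` in `L₂`; the third kind
forms one class. This gives `ind Θₙ(L₂) ≤ ind Θₙ(L₁#L₂)`, `ind Θₘ(L₁) ≤ ind Θ_{m+|v₀|+1}(L₁#L₂)` and
`ind Θₙ(L₁#L₂) ≤ ind Θₙ(L₁) + ind Θₙ(L₂) + 1`, and neither a bounded shift of the level nor a
bounded factor changes the exponential growth rate of the index.
-/

open scoped ENNReal

section Nerode

variable {α : Type*}

lemma thetaN_equivalence (L : Set (List α)) (n : ℕ) : Equivalence (thetaN L n) :=
  ⟨fun _ _ _ => Iff.rfl, fun h w hw => (h w hw).symm, fun h h' w hw => (h w hw).trans (h' w hw)⟩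

lemma quot_mk_thetaN_eq_iff {L : Set (List α)} {n : ℕ} {u v : List α} :
    Quot.mk (thetaN L n) u = Quot.mk (thetaN L n) v ↔ thetaN L n u v := by
  rw [Quot.eq, (thetaN_equivalence L n).eqvGen_iff]

lemma thetaN_of_forall_append_notMem {L : Set (List α)} {n : ℕ} {u v : List α}
    (hu : ∀ w, u ++ w ∉ L) (hv : ∀ w, v ++ w ∉ L) : thetaN L n u v :=
  fun w _ => iff_of_false (hu w) (hv w)

instance [Finite α] (L : Set (List α)) (n : ℕ) : Finite (Quot (thetaN L n)) := by
  have : Finite {w : List α // w.length ≤ n} := List.finite_length_le α n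
  refine Finite.of_injective
    (Quot.lift (fun u (w : {w : List α // w.length ≤ n}) => u ++ w.1 ∈ L)
      fun u v h => funext fun w => propext (h w.1 w.2)) ?_
  rintro ⟨u⟩ ⟨v⟩ h
  exact Quot.sound fun w hw => iff_of_eq (congrFun h ⟨w, hw⟩)

lemma indexN_pos [Finite α] (L : Set (List α)) (n : ℕ) : 0 < indexN L n :=
  have : Nonempty (Quot (thetaN L n)) := ⟨Quot.mk _ []⟩
  Nat.card_pos

lemma indexN_le_indexN_of_thetaN_iff {β : Type*} [Finite β] {L : Set (List α)}
    {L' : Set (List β)} {m n : ℕ} (f : List α → List β)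
    (hf : ∀ u v, thetaN L m u v ↔ thetaN L' n (f u) (f v)) :
    indexN L m ≤ indexN L' n := by
  refine Nat.card_le_card_of_injective (Quot.map f fun u v => (hf u v).1) ?_
  rintro ⟨u⟩ ⟨v⟩ h
  exact Quot.sound ((hf u v).2 (quot_mk_thetaN_eq_iff.1 h))

end Nerode

section MarkedConcat

variable {α : Type*}

def markedConcat (L₁ L₂ : Set (List α)) : Set (List (Option α)) :=
  {w | ∃ u ∈ L₁, ∃ v ∈ L₂, w = u.map some ++ none :: v.map some}

lemma map_some_append_none_cons_inj : ∀ {x u : List α} {t s : List (Option α)},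
    x.map some ++ none :: t = u.map some ++ none :: s → x = u ∧ t = s
  | [], [], _, _, h => ⟨rfl, by simpa using h⟩
  | [], _ :: _, _, _, h => by simp at h
  | _ :: _, [], _, _, h => by simp at h
  | a :: x, b :: u, t, s, h => by
    simp only [List.map_cons, List.cons_append, List.cons.injEq, Option.some.injEq] at h
    obtain ⟨rfl, h⟩ := h
    obtain ⟨rfl, rfl⟩ := map_some_append_none_cons_inj h
    exact ⟨rfl, rfl⟩

lemma eq_map_some_or_eq_append_none_cons : ∀ z : List (Option α),
    (∃ x : List α, z = x.map some) ∨
      ∃ (x : List α) (t : List (Option α)), z = x.map some ++ none :: t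
  | [] => .inl ⟨[], rfl⟩
  | none :: t => .inr ⟨[], t, rfl⟩
  | some a :: z => by
    rcases eq_map_some_or_eq_append_none_cons z with ⟨x, rfl⟩ | ⟨x, t, rfl⟩
    · exact .inl ⟨a :: x, rfl⟩
    · exact .inr ⟨a :: x, t, rfl⟩

variable {L₁ L₂ : Set (List α)}

lemma append_none_cons_mem_markedConcat_iff {x : List α} {t : List (Option α)} :
    x.map some ++ none :: t ∈ markedConcat L₁ L₂ ↔ x ∈ L₁ ∧ ∃ y ∈ L₂, t = y.map some := by
  constructor
  · rintro ⟨u, hu, v, hv, h⟩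
    obtain ⟨rfl, rfl⟩ := map_some_append_none_cons_inj h
    exact ⟨hu, v, hv, rfl⟩
  · rintro ⟨hx, y, hy, rfl⟩
    exact ⟨x, hx, y, hy, rfl⟩

lemma append_none_cons_map_mem_markedConcat_iff {x y : List α} :
    x.map some ++ none :: y.map some ∈ markedConcat L₁ L₂ ↔ x ∈ L₁ ∧ y ∈ L₂ := by
  simp [append_none_cons_mem_markedConcat_iff,
    (List.map_injective_iff.2 (Option.some_injective α)).eq_iff]

lemma map_some_notMem_markedConcat (x : List α) : x.map some ∉ markedConcat L₁ L₂ := by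
  rintro ⟨u, -, v, -, h⟩
  simpa using congrArg (none ∈ ·) h

lemma append_none_cons_notMem_markedConcat {x : List α} {t : List (Option α)}
    (h : x ∉ L₁ ∨ none ∈ t) : x.map some ++ none :: t ∉ markedConcat L₁ L₂ := by
  rw [append_none_cons_mem_markedConcat_iff]
  rintro ⟨hx, y, -, rfl⟩
  simp_all

end MarkedConcat

section MarkedConcatIndex

variable {α : Type*} {L₁ L₂ : Set (List α)}

lemma thetaN_markedConcat_append_none_cons_iff {x x' : List α} (hx : x ∈ L₁) (hx' : x' ∈ L₁)
    (n : ℕ) (y y' : List α) :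
    thetaN (markedConcat L₁ L₂) n (x.map some ++ none :: y.map some)
      (x'.map some ++ none :: y'.map some) ↔ thetaN L₂ n y y' := by
  have append_map_some : ∀ u v w : List α,
      u.map some ++ none :: v.map some ++ w.map some = u.map some ++ none :: (v ++ w).map some := by
    simp
  constructor
  · intro h w hw
    have := h (w.map some) (by simpa using hw)
    rwa [append_map_some, append_map_some, append_none_cons_map_mem_markedConcat_iff,
      append_none_cons_map_mem_markedConcat_iff, and_iff_right hx, and_iff_right hx'] at this
  · intro h w hw
    rcases eq_map_some_or_eq_append_none_cons w with ⟨w, rfl⟩ | ⟨w, t, rfl⟩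
    · rw [append_map_some, append_map_some, append_none_cons_map_mem_markedConcat_iff,
        append_none_cons_map_mem_markedConcat_iff, and_iff_right hx, and_iff_right hx']
      exact h w (by simpa using hw)
    · have two_nones : ∀ u v : List α, u.map some ++ none :: v.map some ++ (w.map some ++ none :: t)
          = u.map some ++ none :: (v.map some ++ w.map some ++ none :: t) := by
        simp
      rw [two_nones, two_nones]
      exact iff_of_false (append_none_cons_notMem_markedConcat (.inr (by simp)))
        (append_none_cons_notMem_markedConcat (.inr (by simp)))

lemma thetaN_markedConcat_map_some {m n : ℕ} (hn : ∀ v ∈ L₂, n ≤ m + v.length + 1)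
    {x x' : List α} (h : thetaN L₁ m x x') :
    thetaN (markedConcat L₁ L₂) n (x.map some) (x'.map some) := by
  intro w hw
  rcases eq_map_some_or_eq_append_none_cons w with ⟨w, rfl⟩ | ⟨w, t, rfl⟩
  · rw [← List.map_append, ← List.map_append]
    exact iff_of_false (map_some_notMem_markedConcat _) (map_some_notMem_markedConcat _)
  · rw [← List.append_assoc, ← List.map_append, ← List.append_assoc, ← List.map_append,
      append_none_cons_mem_markedConcat_iff, append_none_cons_mem_markedConcat_iff]
    refine and_congr_left fun ⟨y, hy, ht⟩ => h w ?_
    have := hn y hy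
    simp only [ht, List.length_append, List.length_map, List.length_cons] at hw
    omega

lemma thetaN_of_thetaN_markedConcat_map_some {v₀ : List α} (hv₀ : v₀ ∈ L₂) {m n : ℕ}
    (hn : m + v₀.length + 1 ≤ n) {x x' : List α}
    (h : thetaN (markedConcat L₁ L₂) n (x.map some) (x'.map some)) : thetaN L₁ m x x' := by
  intro w hw
  have := h (w.map some ++ none :: v₀.map some) (by
    simp only [List.length_append, List.length_map, List.length_cons]; omega)
  rwa [← List.append_assoc, ← List.map_append, ← List.append_assoc, ← List.map_append,
    append_none_cons_map_mem_markedConcat_iff, append_none_cons_map_mem_markedConcat_iff,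
    and_iff_left hv₀, and_iff_left hv₀] at this

variable [Finite α]

lemma indexN_le_indexN_markedConcat_right {u₀ : List α} (hu₀ : u₀ ∈ L₁) (n : ℕ) :
    indexN L₂ n ≤ indexN (markedConcat L₁ L₂) n :=
  indexN_le_indexN_of_thetaN_iff _ fun y y' =>
    (thetaN_markedConcat_append_none_cons_iff hu₀ hu₀ n y y').symm

lemma indexN_le_indexN_markedConcat_left {v₀ : List α} (hv₀ : v₀ ∈ L₂)
    (hmin : ∀ v ∈ L₂, v₀.length ≤ v.length) (m : ℕ) :
    indexN L₁ m ≤ indexN (markedConcat L₁ L₂) (m + (v₀.length + 1)) :=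
  indexN_le_indexN_of_thetaN_iff (List.map some) fun _ _ =>
    ⟨thetaN_markedConcat_map_some fun v hv => by have := hmin v hv; omega,
      thetaN_of_thetaN_markedConcat_map_some hv₀ (by omega)⟩

lemma indexN_markedConcat_le (h₁ : L₁.Nonempty) (n : ℕ) :
    indexN (markedConcat L₁ L₂) n ≤ indexN L₁ n + indexN L₂ n + 1 := by
  obtain ⟨u₀, hu₀⟩ := h₁
  let dead : List (Option α) := [none, none]
  have dead_thetaN : ∀ {x : List α} {t : List (Option α)}, x ∉ L₁ ∨ none ∈ t →
      Quot.mk (thetaN (markedConcat L₁ L₂) n) dead = Quot.mk _ (x.map some ++ none :: t) :=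
    fun h => Quot.sound <| thetaN_of_forall_append_notMem
      (fun _ => append_none_cons_notMem_markedConcat (x := []) (.inr List.mem_cons_self))
      fun w => by
        simpa using
          append_none_cons_notMem_markedConcat (h.imp_right (List.mem_append_left w))
  let S : Option (Quot (thetaN L₁ n) ⊕ Quot (thetaN L₂ n)) → Quot (thetaN (markedConcat L₁ L₂) n)
    | none => Quot.mk _ dead
    | some (.inl q) => Quot.map (List.map some) (fun _ _ =>
        thetaN_markedConcat_map_some fun _ _ => by omega) q
    | some (.inr q) => Quot.map (fun y => u₀.map some ++ none :: y.map some) (fun y y' =>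
        (thetaN_markedConcat_append_none_cons_iff hu₀ hu₀ n y y').2) q
  have hS : Function.Surjective S := by
    rintro ⟨z⟩
    rcases eq_map_some_or_eq_append_none_cons z with ⟨x, rfl⟩ | ⟨x, t, rfl⟩
    · exact ⟨some (.inl (Quot.mk _ x)), rfl⟩
    by_cases hx : x ∈ L₁
    · rcases eq_map_some_or_eq_append_none_cons t with ⟨y, rfl⟩ | ⟨y, t, rfl⟩
      · exact ⟨some (.inr (Quot.mk _ y)), Quot.sound <|
          (thetaN_markedConcat_append_none_cons_iff hu₀ hx n y y).2
            ((thetaN_equivalence _ _).refl y)⟩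
      · exact ⟨none, dead_thetaN (.inr (by simp))⟩
    · exact ⟨none, dead_thetaN (.inl hx)⟩
  calc indexN (markedConcat L₁ L₂) n
      ≤ Nat.card (Option (Quot (thetaN L₁ n) ⊕ Quot (thetaN L₂ n))) :=
        Nat.card_le_card_of_surjective S hS
    _ = indexN L₁ n + indexN L₂ n + 1 := by simp [indexN, Nat.card_sum]

end MarkedConcatIndex

section GrowthRate

open Topology

noncomputable def growthRate (a : ℕ → ℕ) : ℝ≥0∞ :=
  limsup (fun n => ENNReal.ofReal (Real.logb 2 (a n) / n)) atTop

lemma monotone_logb_two_natCast : Monotone fun k : ℕ => Real.logb 2 k := by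
  intro k l hkl
  rcases k.eq_zero_or_pos with rfl | hk
  · rcases l.eq_zero_or_pos with rfl | hl
    · rfl
    · simpa using Real.logb_nonneg one_lt_two (Nat.one_le_cast.2 hl)
  · exact Real.logb_le_logb_of_le one_lt_two (by exact_mod_cast hk) (by exact_mod_cast hkl)

lemma logb_two_natCast_mul_le (k l : ℕ) :
    Real.logb 2 (k * l : ℕ) ≤ Real.logb 2 k + Real.logb 2 l := by
  rcases k.eq_zero_or_pos with rfl | hk
  · simpa using monotone_logb_two_natCast (Nat.zero_le l)
  rcases l.eq_zero_or_pos with rfl | hl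
  · simpa using monotone_logb_two_natCast (Nat.zero_le k)
  rw [Nat.cast_mul, Real.logb_mul (by positivity) (by positivity)]

lemma monotone_growthRate : Monotone growthRate := fun _ _ h =>
  limsup_le_limsup <| .of_forall fun n => ENNReal.ofReal_le_ofReal <|
    div_le_div_of_nonneg_right (monotone_logb_two_natCast (h n)) n.cast_nonneg

lemma growthRate_sup (a b : ℕ → ℕ) : growthRate (a ⊔ b) = growthRate a ⊔ growthRate b := by
  have hmono (n : ℕ) : Monotone fun k : ℕ => ENNReal.ofReal (Real.logb 2 k / n) := fun _ _ h =>
    ENNReal.ofReal_le_ofReal <| div_le_div_of_nonneg_right (monotone_logb_two_natCast h)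
      n.cast_nonneg
  simp only [growthRate, Pi.sup_apply, (hmono _).map_max]
  exact limsup_max

lemma tendsto_ofReal_div_natCast_atTop (c : ℝ) :
    Tendsto (fun n : ℕ => ENNReal.ofReal (c / n)) atTop (𝓝 0) := by
  simpa using ENNReal.tendsto_ofReal (tendsto_const_div_atTop_nhds_zero_nat c)

lemma growthRate_le_of_le_mul {a b : ℕ → ℕ} (C : ℕ) (h : ∀ n, a n ≤ C * b n) :
    growthRate a ≤ growthRate b := by
  have hpt (n : ℕ) : ENNReal.ofReal (Real.logb 2 (a n) / n) ≤
      ENNReal.ofReal (Real.logb 2 C / n) + ENNReal.ofReal (Real.logb 2 (b n) / n) := by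
    calc ENNReal.ofReal (Real.logb 2 (a n) / n)
        ≤ ENNReal.ofReal ((Real.logb 2 C + Real.logb 2 (b n)) / n) :=
          ENNReal.ofReal_le_ofReal <| div_le_div_of_nonneg_right
            ((monotone_logb_two_natCast (h n)).trans (logb_two_natCast_mul_le C (b n)))
            n.cast_nonneg
      _ ≤ _ := by rw [add_div]; exact ENNReal.ofReal_add_le
  calc growthRate a
      ≤ limsup ((fun n : ℕ => ENNReal.ofReal (Real.logb 2 C / n)) +
          fun n => ENNReal.ofReal (Real.logb 2 (b n) / n)) atTop :=
        limsup_le_limsup (.of_forall hpt)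
    _ = growthRate b :=
        ENNReal.limsup_add_of_left_tendsto_zero (tendsto_ofReal_div_natCast_atTop _) _

-- `log (b (n + c)) / n` is `log (b (n + c)) / (n + c)` times a factor tending to `1`.
lemma growthRate_comp_add_le (b : ℕ → ℕ) (c : ℕ) :
    growthRate (fun n => b (n + c)) ≤ growthRate b := by
  have hfactor : ∀ n : ℕ, ENNReal.ofReal (Real.logb 2 (b (n + c)) / n) =
      ENNReal.ofReal (Real.logb 2 (b (n + c)) / ↑(n + c)) * ENNReal.ofReal (↑(n + c) / n) := by
    intro n
    rw [← ENNReal.ofReal_mul' (by positivity)]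
    rcases n.eq_zero_or_pos with rfl | hn
    · simp
    · rw [div_mul_div_cancel₀ (by positivity)]
  have hlim : Tendsto (fun n : ℕ => ENNReal.ofReal (↑(n + c) / n)) atTop (𝓝 1) := by
    have hreal : Tendsto (fun n : ℕ => 1 + (c : ℝ) / n) atTop (𝓝 1) := by
      simpa using (tendsto_const_div_atTop_nhds_zero_nat (c : ℝ)).const_add 1
    refine (ENNReal.tendsto_ofReal hreal).congr' ?_ |>.trans (by rw [ENNReal.ofReal_one])
    filter_upwards [eventually_ne_atTop 0] with n hn
    rw [Nat.cast_add, add_div, div_self (by positivity)]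
  calc growthRate (fun n => b (n + c))
      = limsup ((fun n : ℕ => ENNReal.ofReal (Real.logb 2 (b (n + c)) / ↑(n + c))) *
          fun n : ℕ => ENNReal.ofReal (↑(n + c) / n)) atTop := by
        simp only [growthRate, hfactor]; rfl
    _ ≤ limsup (fun n : ℕ => ENNReal.ofReal (Real.logb 2 (b (n + c)) / ↑(n + c))) atTop *
          limsup (fun n : ℕ => ENNReal.ofReal (↑(n + c) / n)) atTop :=
        ENNReal.limsup_mul_le' (.inr (hlim.limsup_eq ▸ ENNReal.one_ne_top))
          (.inr (hlim.limsup_eq ▸ one_ne_zero))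
    _ = growthRate b := by
        rw [hlim.limsup_eq, mul_one, growthRate,
          ← limsup_nat_add (fun n => ENNReal.ofReal (Real.logb 2 (b n) / n)) c]

end GrowthRate

theorem entropy_marked_concat {α : Type*} [Fintype α]
    (L₁ L₂ : Set (List α)) (h₁ : L₁.Nonempty) (h₂ : L₂.Nonempty) :
    entropy {w : List (Option α) | ∃ u ∈ L₁, ∃ v ∈ L₂,
        w = u.map some ++ none :: v.map some} =
      max (entropy L₁) (entropy L₂) := by
  obtain ⟨u₀, hu₀⟩ := h₁
  obtain ⟨v₀, hv₀, hmin⟩ : ∃ v₀ ∈ L₂, ∀ v ∈ L₂, v₀.length ≤ v.length :=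
    ⟨_, Function.argminOn_mem _ _ h₂, fun _ hv => Function.argminOn_le _ _ hv⟩
  change growthRate (indexN (markedConcat L₁ L₂)) =
    growthRate (indexN L₁) ⊔ growthRate (indexN L₂)
  refine le_antisymm ?_ (max_le ?_ ?_)
  · rw [← growthRate_sup]
    refine growthRate_le_of_le_mul 3 fun n => ?_
    have := indexN_markedConcat_le (L₂ := L₂) ⟨u₀, hu₀⟩ n
    have := indexN_pos L₁ n
    have := indexN_pos L₂ n
    simp only [Pi.sup_apply]
    omega
  · exact (monotone_growthRate (indexN_le_indexN_markedConcat_left hv₀ hmin)).trans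
      (growthRate_comp_add_le _ (v₀.length + 1))
  · exact monotone_growthRate (indexN_le_indexN_markedConcat_right hu₀)
end

section
/- The map L ↦ PAD(L), where PAD(L) = {uv | u ∈ L, v ∈ Σ^{2^{|u|}}}, is injective on languages over Σ. Consequently, there are uncountably many languages over a two-letter alphabet with topological entropy zero. -/
open Filter

/-- The padded version of a language. -/
def PAD {α : Type*} (L : Set (List α)) : Set (List α) :=
  {w | ∃ u ∈ L, ∃ v : List α, v.length = 2 ^ u.length ∧ w = u ++ v}

/-!
Since `m ↦ m + 2 ^ m` is injective, the length of a padded word `u v` determines `|u|`, so `u`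
can be read back from `u v` and `PAD` is injective.

For the second claim, the unary languages `{a ^ p | p ∈ P}` with `P ⊆ {2 ^ k}` form an injective
image of the power set of `ℕ`, and each has entropy zero: for `m ≤ n` the `Θ_n`-class of `a ^ m`
is fixed by `m`, and for `m > n` by the position at which the window `[m, m + n]` meets `P`,
which it does at most once because `P` is lacunary. So `Θ_n` has polynomially many classes.
-/

open Topology

section Padding

variable {α : Type*}

theorem mem_iff_append_replicate_mem_PAD (L : Set (List α)) (a : α) (u : List α) :
    u ∈ L ↔ u ++ List.replicate (2 ^ u.length) a ∈ PAD L := by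
  refine ⟨fun hu => ⟨u, hu, _, List.length_replicate, rfl⟩, ?_⟩
  rintro ⟨u', hu', v, hv, huv⟩
  have hlen : u.length = u'.length := by
    have hmono : StrictMono fun m : ℕ => m + 2 ^ m :=
      strictMono_id.add fun _ _ => Nat.pow_lt_pow_right one_lt_two
    apply hmono.injective
    simpa [hv] using congrArg List.length huv
  rwa [(List.append_inj huv hlen).1]

theorem PAD_injective [Nonempty α] : Function.Injective (PAD : Set (List α) → Set (List α)) := by
  intro L₁ L₂ hL
  obtain ⟨a⟩ := ‹Nonempty α›
  ext u
  rw [mem_iff_append_replicate_mem_PAD L₁ a, mem_iff_append_replicate_mem_PAD L₂ a, hL]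

end Padding

section Entropy

variable {α : Type*}

theorem indexN_le_card_of_eq_imp_thetaN {β : Type*} [Finite β] {L : Set (List α)} {n : ℕ}
    (f : List α → β) (hf : ∀ u v, f u = f v → thetaN L n u v) :
    indexN L n ≤ Nat.card β := by
  refine Nat.card_le_card_of_injective (fun q => f q.out) fun q₁ q₂ hq => ?_
  rw [← Quot.out_eq q₁, ← Quot.out_eq q₂]
  exact Quot.sound (hf _ _ hq)

theorem tendsto_logb_pow_div_atTop (k : ℕ) :
    Tendsto (fun n : ℕ => Real.logb 2 (((n : ℝ) + 2) ^ k) / n) atTop (𝓝 0) := by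
  have hlog : Tendsto (fun n : ℕ => Real.log ((n : ℝ) + 2) / n) atTop (𝓝 0) := by
    have := (Real.tendsto_pow_log_div_mul_add_atTop 1 (-2) 1 one_ne_zero).comp
      (tendsto_atTop_add_const_right _ 2 tendsto_natCast_atTop_atTop)
    refine this.congr fun n => ?_
    simp only [Function.comp_apply, pow_one, one_mul]
    ring_nf
  have := hlog.const_mul (k / Real.log 2)
  rw [mul_zero] at this
  refine this.congr fun n => ?_
  rw [Real.logb, Real.log_pow]
  ring

theorem entropy_eq_zero_of_indexN_le_pow {L : Set (List α)} (k : ℕ)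
    (h : ∀ n, indexN L n ≤ (n + 2) ^ k) : entropy L = 0 := by
  refine Tendsto.limsup_eq ?_
  suffices Tendsto (fun n : ℕ => Real.logb 2 (indexN L n) / n) atTop (𝓝 0) by
    simpa using ENNReal.tendsto_ofReal this
  refine squeeze_zero (fun n => ?_) (fun n => ?_) (tendsto_logb_pow_div_atTop k)
  · exact div_nonneg (div_nonneg (Real.log_natCast_nonneg _) (Real.log_nonneg one_le_two))
      n.cast_nonneg
  · refine div_le_div_of_nonneg_right ?_ n.cast_nonneg
    rcases (indexN L n).eq_zero_or_pos with h0 | hpos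
    · rw [h0, Nat.cast_zero, Real.logb_zero]
      exact Real.logb_nonneg one_lt_two (one_le_pow₀ (by linarith [n.cast_nonneg (α := ℝ)]))
    · exact Real.logb_le_logb_of_le one_lt_two (by exact_mod_cast hpos) (by exact_mod_cast h n)

end Entropy

section Lacunary

def IsLacunary (P : Set ℕ) : Prop :=
  ∀ p ∈ P, ∀ q ∈ P, p < q → 2 * p ≤ q

theorem isLacunary_image_two_pow (S : Set ℕ) : IsLacunary ((2 ^ ·) '' S) := by
  rintro _ ⟨i, -, rfl⟩ _ ⟨j, -, rfl⟩ hij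
  rw [← pow_succ']
  exact Nat.pow_le_pow_right two_pos ((Nat.pow_lt_pow_iff_right (by norm_num)).1 hij)

variable {P : Set ℕ}

theorem IsLacunary.eq_of_add_mem (hP : IsLacunary P) {n m j₁ j₂ : ℕ} (hm : n < m)
    (hj₁ : j₁ ≤ n) (hj₂ : j₂ ≤ n) (h₁ : m + j₁ ∈ P) (h₂ : m + j₂ ∈ P) : j₁ = j₂ := by
  by_contra hne
  rcases Nat.lt_or_gt_of_ne hne with hlt | hlt
  · have := hP _ h₁ _ h₂ (by omega)
    omega
  · have := hP _ h₂ _ h₁ (by omega)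
    omega

open Classical in
noncomputable def firstHit (P : Set ℕ) (n m : ℕ) : Option (Fin (n + 1)) :=
  Fin.find? fun j => decide (m + j ∈ P)

theorem IsLacunary.add_mem_iff_firstHit_eq (hP : IsLacunary P) {n m j : ℕ} (hm : n < m)
    (hj : j ≤ n) : m + j ∈ P ↔ firstHit P n m = some ⟨j, Nat.lt_succ_of_le hj⟩ := by
  simp only [firstHit, Fin.find?_eq_some_iff, decide_eq_true_eq, decide_eq_false_iff_not]
  refine ⟨fun hmem => ⟨hmem, fun i hi himem => ?_⟩, And.left⟩
  have := hP.eq_of_add_mem hm (Nat.lt_succ_iff.1 i.isLt) hj himem hmem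
  exact hi.ne (Fin.ext this)

end Lacunary

section UnaryLanguage

variable {α : Type*}

def unaryLang (a : α) (P : Set ℕ) : Set (List α) :=
  (List.replicate · a) '' P

variable {a : α} {P : Set ℕ}

theorem unaryLang_injective (a : α) : Function.Injective (unaryLang a) :=
  Set.image_injective.2 (List.replicate_left_injective a)

theorem append_mem_unaryLang_iff {u w : List α} :
    u ++ w ∈ unaryLang a P ↔
      u = List.replicate u.length a ∧ w = List.replicate w.length a ∧ u.length + w.length ∈ P := by
  simp only [unaryLang, Set.mem_image, eq_comm (b := u ++ w), List.append_eq_replicate_iff]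
  constructor
  · rintro ⟨p, hp, rfl, hu, hw⟩
    exact ⟨hu, hw, hp⟩
  · rintro ⟨hu, hw, hp⟩
    exact ⟨_, hp, rfl, hu, hw⟩

open Classical in
noncomputable def unaryClass (a : α) (P : Set ℕ) (n : ℕ) (u : List α) :
    Bool × Fin (n + 2) × Option (Fin (n + 1)) :=
  (decide (u = List.replicate u.length a), ⟨min u.length (n + 1), by omega⟩,
    firstHit P n u.length)

theorem IsLacunary.thetaN_unaryLang (hP : IsLacunary P) {n : ℕ} {u v : List α}
    (h : unaryClass a P n u = unaryClass a P n v) : thetaN (unaryLang a P) n u v := by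
  simp only [unaryClass, Prod.mk.injEq, decide_eq_decide, Fin.mk.injEq] at h
  obtain ⟨hunary, hmin, hhit⟩ := h
  intro w hw
  rw [append_mem_unaryLang_iff, append_mem_unaryLang_iff, hunary]
  refine and_congr_right fun _ => and_congr_right fun _ => ?_
  rcases le_or_gt u.length n with hu | hu
  · rw [show u.length = v.length by omega]
  · rw [hP.add_mem_iff_firstHit_eq hu hw, hP.add_mem_iff_firstHit_eq (by omega) hw, hhit]

theorem IsLacunary.entropy_unaryLang (hP : IsLacunary P) : entropy (unaryLang a P) = 0 := by
  refine entropy_eq_zero_of_indexN_le_pow 3 fun n => ?_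
  calc indexN (unaryLang a P) n
      ≤ Nat.card (Bool × Fin (n + 2) × Option (Fin (n + 1))) :=
        indexN_le_card_of_eq_imp_thetaN _ fun _ _ => hP.thetaN_unaryLang
    _ = 2 * ((n + 2) * (n + 2)) := by simp [Nat.card_eq_fintype_card]
    _ ≤ (n + 2) ^ 3 := by nlinarith

end UnaryLanguage

theorem pad_injective_and_uncountably_many_zero_entropy {α : Type*} [Fintype α]
    (h : 2 ≤ Fintype.card α) :
    Function.Injective (fun L : Set (List α) => PAD L) ∧
      ¬ Set.Countable {L : Set (List α) | entropy L = 0} := by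
  have : Nonempty α := Fintype.card_pos_iff.1 (by omega)
  refine ⟨PAD_injective, fun hcount => ?_⟩
  obtain ⟨a⟩ := ‹Nonempty α›
  have hmaps : Set.MapsTo (fun S : Set ℕ => unaryLang a ((2 ^ ·) '' S)) Set.univ
      {L | entropy L = 0} := fun S _ => (isLacunary_image_two_pow S).entropy_unaryLang
  have hinj : Function.Injective fun S : Set ℕ => unaryLang a ((2 ^ ·) '' S) :=
    (unaryLang_injective a).comp (Set.image_injective.2 (Nat.pow_right_injective le_rfl))
  have : Countable (Set ℕ) :=
    Set.countable_univ_iff.1 (hmaps.countable_of_injOn hinj.injOn hcount)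
  obtain ⟨f, hf⟩ := Countable.exists_injective_nat (Set ℕ)
  exact Function.cantor_injective f hf
end
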